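/- arXiv:1510.08491 — 9 statements merged into one kernel-verified Lean document; each statement's English description precedes it below -/
import Mathlib

section
/- If gcd(d,n)=1 and e is the multiplicative inverse of d modulo n, then the map A_i ↦ C_{ie}, B_i ↦ B_{ie}, C_i ↦ A_{ie} is a graph isomorphism from Pr_n(b,c,d) to Pr_n(ce,be,e). -/
/-- Vertices of a propeller graph: `A i`, `B i`, `C i` for `i : ZMod n`. -/
inductive PVert (n : ℕ) : Type
  | A (i : ZMod n)
  | B (i : ZMod n)
  | C (i : ZMod n)
  deriving DecidableEq

open PVert

/-- One-directional edge relation of the propeller graph `Pr_n(b,c,d)`. -/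
def propellerRel (n : ℕ) (b c d : ZMod n) (u v : PVert n) : Prop :=
  ∃ i : ZMod n,
    (u = A i ∧ v = A (i + 1)) ∨ (u = A i ∧ v = B i) ∨ (u = B i ∧ v = A (i + b)) ∨
    (u = B i ∧ v = C (i + c)) ∨ (u = C i ∧ v = B i) ∨ (u = C i ∧ v = C (i + d))

/-- The propeller graph `Pr_n(b,c,d)`: a tetravalent graph on `3n` vertices. -/
def propeller (n : ℕ) (b c d : ZMod n) : SimpleGraph (PVert n) where
  Adj u v := u ≠ v ∧ (propellerRel n b c d u v ∨ propellerRel n b c d v u)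
  symm := ⟨fun _ _ h => ⟨h.1.symm, h.2.symm⟩⟩
  loopless := ⟨fun _ h => h.1 rfl⟩

/-!
Multiplying every index by `e = d⁻¹` and exchanging `A` with `C` carries each edge family of
`Pr_n(b,c,d)` onto one of `Pr_n(ce,be,e)`: the `C`-cycle of step `d` becomes the `A`-cycle of
step `de = 1`, the `A`-cycle becomes the `C`-cycle of step `e`, and the spokes of lengths `b`, `c`
are exchanged and scaled to `be`, `ce`. The same map with `d` in place of `e` takes
`Pr_n(ce,be,e)` back to `Pr_n(ced,bed,ed) = Pr_n(b,c,d)` and is the inverse.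
-/

namespace PVert

variable {n : ℕ}

def swapScale (e : ZMod n) : PVert n → PVert n
  | A i => C (i * e)
  | B i => B (i * e)
  | C i => A (i * e)

lemma swapScale_swapScale {d e : ZMod n} (hed : e * d = 1) (u : PVert n) :
    swapScale d (swapScale e u) = u := by
  cases u <;> simp [swapScale, mul_assoc, hed]

lemma swapScale_injective {d e : ZMod n} (hed : e * d = 1) :
    Function.Injective (swapScale e) :=
  Function.LeftInverse.injective (g := swapScale d) (swapScale_swapScale hed)

def swapScaleEquiv {d e : ZMod n} (hde : d * e = 1) : PVert n ≃ PVert n where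
  toFun := swapScale e
  invFun := swapScale d
  left_inv := swapScale_swapScale (mul_comm d e ▸ hde)
  right_inv := swapScale_swapScale hde

end PVert

section

variable {n : ℕ} {b c d e : ZMod n}

lemma propellerRel_swapScale (hde : d * e = 1) {u v : PVert n}
    (h : propellerRel n b c d u v) :
    propellerRel n (c * e) (b * e) e (swapScale e u) (swapScale e v) := by
  obtain ⟨i, h⟩ := h
  refine ⟨i * e, ?_⟩
  rcases h with ⟨rfl, rfl⟩ | ⟨rfl, rfl⟩ | ⟨rfl, rfl⟩ | ⟨rfl, rfl⟩ | ⟨rfl, rfl⟩ | ⟨rfl, rfl⟩ <;>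
    simp [swapScale, add_mul, hde]

lemma propeller_adj_swapScale (hde : d * e = 1) {u v : PVert n}
    (h : (propeller n b c d).Adj u v) :
    (propeller n (c * e) (b * e) e).Adj (swapScale e u) (swapScale e v) :=
  ⟨(swapScale_injective (mul_comm d e ▸ hde)).ne h.1,
    h.2.imp (propellerRel_swapScale hde) (propellerRel_swapScale hde)⟩

def propellerSwapScaleIso (hde : d * e = 1) :
    propeller n b c d ≃g propeller n (c * e) (b * e) e where
  toEquiv := swapScaleEquiv hde
  map_rel_iff' {u v} := by
    refine ⟨fun h => ?_, propeller_adj_swapScale hde⟩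
    have hed : e * d = 1 := mul_comm d e ▸ hde
    simpa [swapScale_swapScale hed, mul_assoc, hed] using
      propeller_adj_swapScale (b := c * e) (c := b * e) (u := swapScale e u) (v := swapScale e v)
        hed h

end

theorem propeller_inverse_d_iso_general
    (n b c d e : ℕ) (hde : (d : ZMod n) * (e : ZMod n) = 1) :
    ∃ φ : propeller n b c d ≃g propeller n ((c : ZMod n) * e) ((b : ZMod n) * e) e,
      (∀ i : ZMod n, φ (A i) = C (i * (e : ZMod n))) ∧
      (∀ i : ZMod n, φ (B i) = B (i * (e : ZMod n))) ∧
      (∀ i : ZMod n, φ (C i) = A (i * (e : ZMod n))) :=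
  ⟨propellerSwapScaleIso hde, fun _ => rfl, fun _ => rfl, fun _ => rfl⟩

/-- if `gcd(d,n) = 1` and `e` is the multiplicative inverse of `d` modulo `n`,
then `A_i ↦ C_{ie}, B_i ↦ B_{ie}, C_i ↦ A_{ie}` is a graph isomorphism from `Pr_n(b,c,d)`
to `Pr_n(ce,be,e)`. -/
theorem propeller_inverse_d_iso
    (n b c d e : ℕ) (hn : 3 ≤ n) (hb : 0 < b ∧ b < n) (hc : 0 < c ∧ c < n)
    (hd : 0 < d ∧ d < n) (hd2 : 2 * d ≠ n) (hcop : Nat.gcd d n = 1)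
    (he : 0 < e ∧ e < n) (hde : (d : ZMod n) * (e : ZMod n) = 1) :
    ∃ φ : propeller n b c d ≃g propeller n ((c : ZMod n) * e) ((b : ZMod n) * e) e,
      (∀ i : ZMod n, φ (A i) = C (i * (e : ZMod n))) ∧
      (∀ i : ZMod n, φ (B i) = B (i * (e : ZMod n))) ∧
      (∀ i : ZMod n, φ (C i) = A (i * (e : ZMod n))) :=
  propeller_inverse_d_iso_general n b c d e hde
end

section
/- Every propeller graph has girth at most 6. In particular, if b ≡ ±1 (mod n) then the graph contains a 3-cycle, and otherwise the 6-tuple (A_0, A_1, B_1, A_{1+b}, A_b, B_0) is a cycle of length 6 in the graph. -/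
open PVert

/-!
Every `B_i` lies on the path `A_i B_i A_{i+b}`. If `b = ±1` this path and one rim edge
`A_i A_{i±1}` form a triangle. Otherwise the paths through `B_0` and `B_1` and the rim edges
`A_0 A_1`, `A_b A_{b+1}` form the hexagon `A_0 A_1 B_1 A_{1+b} A_b B_0`, whose vertices are
distinct exactly because `b ≠ 0, ±1`.
-/

open SimpleGraph

theorem SimpleGraph.girth_le_three_of_adj {V : Type*} {G : SimpleGraph V} {u v w : V}
    (huv : G.Adj u v) (hvw : G.Adj v w) (hwu : G.Adj w u) : G.girth ≤ 3 := by
  have hcycle : (Walk.cons huv (Walk.cons hvw (Walk.cons hwu Walk.nil))).IsCycle := by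
    rw [Walk.isCycle_iff_isPath_tail_and_le_length]
    refine ⟨Walk.IsPath.mk' ?_, by simp⟩
    simp [hvw.ne, huv.ne.symm, hwu.ne]
  exact girth_le_length hcycle

namespace Propeller

variable {n : ℕ} {b c d : ZMod n}

theorem adj_A_A [Nontrivial (ZMod n)] {i j : ZMod n} (h : i + 1 = j) :
    (propeller n b c d).Adj (A i) (A j) :=
  ⟨by simp [← h], Or.inl ⟨i, by simp [h]⟩⟩

theorem adj_A_B (i : ZMod n) : (propeller n b c d).Adj (A i) (B i) :=
  ⟨by simp, Or.inl ⟨i, by simp⟩⟩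

theorem adj_B_A {i j : ZMod n} (h : i + b = j) : (propeller n b c d).Adj (B i) (A j) :=
  ⟨by simp, Or.inl ⟨i, by simp [h]⟩⟩

theorem exists_triangle [Nontrivial (ZMod n)] (hb : b = 1 ∨ b = -1) :
    ∃ u v w : PVert n, (propeller n b c d).Adj u v ∧ (propeller n b c d).Adj v w ∧
      (propeller n b c d).Adj w u := by
  rcases hb with rfl | rfl
  · exact ⟨A 0, A 1, B 0, adj_A_A (zero_add 1), (adj_B_A (zero_add 1)).symm, (adj_A_B 0).symm⟩
  · exact ⟨A 0, A 1, B 1, adj_A_A (zero_add 1), adj_A_B 1, adj_B_A (add_neg_cancel 1)⟩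

variable (b c d) in
def hexagon [Nontrivial (ZMod n)] : (propeller n b c d).Walk (A 0) (A 0) :=
  .cons (adj_A_A (zero_add 1)) <| .cons (adj_A_B 1) <| .cons (adj_B_A rfl) <|
    .cons (adj_A_A (add_comm b 1)).symm <| .cons (adj_B_A (zero_add b)).symm <|
    .cons (adj_A_B 0).symm .nil

theorem hexagon_support [Nontrivial (ZMod n)] :
    (hexagon b c d).support = [A 0, A 1, B 1, A (1 + b), A b, B 0, A 0] :=
  rfl

theorem hexagon_isCycle [Nontrivial (ZMod n)] (hb0 : b ≠ 0) (hb1 : b ≠ 1) (hbm1 : b ≠ -1) :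
    (hexagon b c d).IsCycle := by
  rw [Walk.isCycle_iff_isPath_tail_and_le_length]
  refine ⟨Walk.IsPath.mk' ?_, by simp [hexagon]⟩
  have h1 : 1 + b ≠ 0 := fun h => hbm1 (eq_neg_of_add_eq_zero_right h)
  simp [hexagon, hb0, Ne.symm hb1, h1]

end Propeller

open Propeller in
theorem propeller_girth_le_six_general
    (n b c d : ℕ) (hn : 3 ≤ n) (hb : 0 < b ∧ b < n) :
    (propeller n b c d).girth ≤ 6 ∧
    (((b : ZMod n) = 1 ∨ (b : ZMod n) = -1) →
      ∃ u v w : PVert n, (propeller n b c d).Adj u v ∧ (propeller n b c d).Adj v w ∧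
        (propeller n b c d).Adj w u) ∧
    (((b : ZMod n) ≠ 1 ∧ (b : ZMod n) ≠ -1) →
      ∃ p : (propeller n b c d).Walk (A 0) (A 0), p.IsCycle ∧ p.length = 6 ∧
        p.support = [A 0, A 1, B 1, A (1 + (b : ZMod n)), A (b : ZMod n), B 0, A 0]) := by
  have : Fact (1 < n) := ⟨by omega⟩
  have hb0 : (b : ZMod n) ≠ 0 := fun h => hb.1.ne (by simpa [h] using ZMod.val_natCast_of_lt hb.2)
  refine ⟨?_, exists_triangle, fun h => ⟨_, hexagon_isCycle hb0 h.1 h.2, rfl, hexagon_support⟩⟩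
  by_cases hpm : (b : ZMod n) = 1 ∨ (b : ZMod n) = -1
  · obtain ⟨u, v, w, huv, hvw, hwu⟩ := exists_triangle (c := (c : ZMod n)) (d := (d : ZMod n)) hpm
    exact (girth_le_three_of_adj huv hvw hwu).trans (by norm_num)
  · obtain ⟨hb1, hbm1⟩ := not_or.mp hpm
    exact girth_le_length (hexagon_isCycle (c := (c : ZMod n)) (d := (d : ZMod n)) hb0 hb1 hbm1)

/-- every propeller graph has girth at most `6`.  In particular, if
`b ≡ ±1 (mod n)` the graph contains a 3-cycle, and otherwise
`(A_0, A_1, B_1, A_{1+b}, A_b, B_0)` is a cycle of length `6`. -/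
theorem propeller_girth_le_six
    (n b c d : ℕ) (hn : 3 ≤ n) (hb : 0 < b ∧ b < n) (hc : 0 < c ∧ c < n)
    (hd : 0 < d ∧ d < n) (hd2 : 2 * d ≠ n) :
    (propeller n b c d).girth ≤ 6 ∧
    (((b : ZMod n) = 1 ∨ (b : ZMod n) = -1) →
      ∃ u v w : PVert n, (propeller n b c d).Adj u v ∧ (propeller n b c d).Adj v w ∧
        (propeller n b c d).Adj w u) ∧
    (((b : ZMod n) ≠ 1 ∧ (b : ZMod n) ≠ -1) →
      ∃ p : (propeller n b c d).Walk (A 0) (A 0), p.IsCycle ∧ p.length = 6 ∧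
        p.support = [A 0, A 1, B 1, A (1 + (b : ZMod n)), A (b : ZMod n), B 0, A 0]) :=
  propeller_girth_le_six_general n b c d hn hb
end

section
/- A propeller graph Γ = Pr_n(b,c,d) is edge-transitive if and only if its automorphism group contains an element sending the arc (A_0, A_1) to the arc (A_0, B_0). -/
open PVert

/-- A graph is edge-transitive if its automorphism group acts transitively on its edges. -/
def EdgeTransitive {V : Type*} (G : SimpleGraph V) : Prop :=
  ∀ e₁ ∈ G.edgeSet, ∀ e₂ ∈ G.edgeSet, ∃ φ : G ≃g G, e₁.map φ = e₂

namespace SimpleGraph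

variable {V : Type*}

section FromRel

variable {r : V → V → Prop}

theorem fromRel_adj_apply {f : V → V} (hf : f.Injective)
    (hr : ∀ u v, r u v → r (f u) (f v) ∨ r (f v) (f u)) {u v : V}
    (h : (fromRel r).Adj u v) : (fromRel r).Adj (f u) (f v) := by
  obtain ⟨hne, huv | hvu⟩ := h
  · exact ⟨hf.ne hne, hr u v huv⟩
  · exact ⟨hf.ne hne, (hr v u hvu).symm⟩

def fromRelIsoOfMaps (e : V ≃ V) (he : ∀ u v, r u v → r (e u) (e v) ∨ r (e v) (e u))
    (he' : ∀ u v, r u v → r (e.symm u) (e.symm v) ∨ r (e.symm v) (e.symm u)) :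
    fromRel r ≃g fromRel r where
  toEquiv := e
  map_rel_iff' {u v} := by
    refine ⟨fun h => ?_, fromRel_adj_apply e.injective he⟩
    simpa using fromRel_adj_apply e.symm.injective he' h

end FromRel

variable (G : SimpleGraph V)

def AutRel (e₁ e₂ : Sym2 V) : Prop := ∃ φ : G ≃g G, e₁.map φ = e₂

variable {G}

namespace AutRel

theorem refl (e : Sym2 V) : G.AutRel e e := ⟨1, by simp⟩

theorem symm {e₁ e₂ : Sym2 V} (h : G.AutRel e₁ e₂) : G.AutRel e₂ e₁ := by
  obtain ⟨φ, rfl⟩ := h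
  exact ⟨φ⁻¹, by simp [Sym2.map_map]⟩

theorem trans {e₁ e₂ e₃ : Sym2 V} (h₁₂ : G.AutRel e₁ e₂) (h₂₃ : G.AutRel e₂ e₃) :
    G.AutRel e₁ e₃ := by
  obtain ⟨φ, rfl⟩ := h₁₂
  obtain ⟨ψ, rfl⟩ := h₂₃
  exact ⟨ψ * φ, by simp [Sym2.map_map]⟩

theorem map_pair {e : Sym2 V} {x y x' y' : V} (h : G.AutRel e s(x, y)) (φ : G ≃g G)
    (hx : φ x = x') (hy : φ y = y') : G.AutRel e s(x', y') :=
  h.trans ⟨φ, by rw [Sym2.map_mk, hx, hy]⟩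

theorem exists_apply_eq {x y x' y' : V} (h : G.AutRel s(x, y) s(x', y')) :
    ∃ φ : G ≃g G, φ x = x' ∧ φ y = y' ∨ φ x = y' ∧ φ y = x' := by
  obtain ⟨φ, hφ⟩ := h
  exact ⟨φ, by rwa [Sym2.map_mk, Sym2.eq_iff] at hφ⟩

theorem exists_apply_eq_of_swap {x y x' y' : V} (h : G.AutRel s(x, y) s(x', y'))
    (σ : G ≃g G) (hσx : σ x = y) (hσy : σ y = x) : ∃ φ : G ≃g G, φ x = x' ∧ φ y = y' := by
  obtain ⟨φ, ⟨hx, hy⟩ | ⟨hx, hy⟩⟩ := h.exists_apply_eq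
  · exact ⟨φ, hx, hy⟩
  · exact ⟨φ * σ, by simp [hσx, hσy, hx, hy]⟩

end AutRel

theorem edgeTransitive_of_forall_autRel (e₀ : Sym2 V) (h : ∀ e ∈ G.edgeSet, G.AutRel e₀ e) :
    EdgeTransitive G :=
  fun _ he₁ _ he₂ => (h _ he₁).symm.trans (h _ he₂)

section Star

variable {e₀ : Sym2 V} {φ : G ≃g G} {u u' : V}

theorem autRel_pair_of_apply_eq (hφ : φ u = u') {t : V}
    (h : G.AutRel e₀ s(u, φ.symm t)) : G.AutRel e₀ s(u', t) :=
  h.map_pair φ hφ (φ.apply_symm_apply t)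

theorem adj_symm_apply_of_apply_eq (hφ : φ u = u') {t : V} (ht : G.Adj u' t) :
    G.Adj u (φ.symm t) := by
  rwa [← φ.map_adj_iff, φ.apply_symm_apply, hφ]

theorem forall_adj_autRel_of_apply_eq (hφ : φ u = u')
    (hu : ∀ z, G.Adj u z → G.AutRel e₀ s(u, z)) (t : V) (ht : G.Adj u' t) :
    G.AutRel e₀ s(u', t) :=
  autRel_pair_of_apply_eq hφ (hu _ (adj_symm_apply_of_apply_eq hφ ht))

theorem autRel_or_autRel_of_apply_eq (hφ : φ u = u') {w : V}
    (hu : ∀ z, G.Adj u z → z ≠ w → G.AutRel e₀ s(u, z)) {t t' : V} (ht : G.Adj u' t)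
    (ht' : G.Adj u' t') (htt' : t ≠ t') :
    G.AutRel e₀ s(u', t) ∨ G.AutRel e₀ s(u', t') := by
  by_cases hw : φ.symm t = w
  · refine .inr (autRel_pair_of_apply_eq hφ (hu _ (adj_symm_apply_of_apply_eq hφ ht') ?_))
    rw [← hw]
    exact φ.symm.injective.ne htt'.symm
  · exact .inl (autRel_pair_of_apply_eq hφ (hu _ (adj_symm_apply_of_apply_eq hφ ht) hw))

end Star

end SimpleGraph

theorem ZMod.neg_natCast_ne_natCast {n d : ℕ} (hd : 0 < d ∧ d < n) (hd2 : 2 * d ≠ n) :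
    -(d : ZMod n) ≠ d := by
  rw [Ne, ZMod.neg_eq_self_iff, ← ZMod.val_eq_zero, ZMod.val_cast_of_lt hd.2]
  omega

open SimpleGraph

namespace Propeller

variable {n : ℕ} {b c d : ZMod n}

@[simp]
def shift (k : ZMod n) : PVert n → PVert n
  | A i => A (i + k)
  | B i => B (i + k)
  | C i => C (i + k)

def shiftEquiv (k : ZMod n) : PVert n ≃ PVert n where
  toFun := shift k
  invFun := shift (-k)
  left_inv u := by cases u <;> simp
  right_inv u := by cases u <;> simp

theorem propellerRel_shift (k : ZMod n) {u v : PVert n} (h : propellerRel n b c d u v) :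
    propellerRel n b c d (shift k u) (shift k v) := by
  obtain ⟨i, h⟩ := h
  rcases h with ⟨rfl, rfl⟩ | ⟨rfl, rfl⟩ | ⟨rfl, rfl⟩ | ⟨rfl, rfl⟩ | ⟨rfl, rfl⟩ | ⟨rfl, rfl⟩ <;>
    simp only [propellerRel, shift, A.injEq, B.injEq, C.injEq, reduceCtorEq] <;> grind

/-- The reflection `i ↦ 1 - i` of the `A`-cycle; its action on `B` and `C` is forced by the
edges `{B i, A i}`, `{B i, A (i + b)}` and `{B i, C (i + c)}`. -/
@[simp]
def reflect (b c : ZMod n) : PVert n → PVert n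
  | A i => A (1 - i)
  | B i => B (1 - b - i)
  | C i => C (1 - b + c - i)

theorem reflect_reflect (u : PVert n) : reflect b c (reflect b c u) = u := by
  cases u <;> simp

theorem propellerRel_reflect {u v : PVert n} (h : propellerRel n b c d u v) :
    propellerRel n b c d (reflect b c v) (reflect b c u) := by
  obtain ⟨i, h⟩ := h
  rcases h with ⟨rfl, rfl⟩ | ⟨rfl, rfl⟩ | ⟨rfl, rfl⟩ | ⟨rfl, rfl⟩ | ⟨rfl, rfl⟩ | ⟨rfl, rfl⟩ <;>
    simp only [propellerRel, reflect, A.injEq, B.injEq, C.injEq, reduceCtorEq] <;> grind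

variable (b c d)

def rotation (k : ZMod n) : propeller n b c d ≃g propeller n b c d :=
  fromRelIsoOfMaps (shiftEquiv k) (fun _ _ h => .inl (propellerRel_shift k h))
    (fun _ _ h => .inl (propellerRel_shift (-k) h))

def reflection : propeller n b c d ≃g propeller n b c d :=
  fromRelIsoOfMaps ⟨reflect b c, reflect b c, reflect_reflect, reflect_reflect⟩
    (fun _ _ h => .inr (propellerRel_reflect h)) (fun _ _ h => .inr (propellerRel_reflect h))

variable {b c d}

@[simp]
theorem rotation_apply (k : ZMod n) (u : PVert n) : rotation b c d k u = shift k u := rfl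

@[simp]
theorem reflection_apply (u : PVert n) : reflection b c d u = reflect b c u := rfl

theorem eq_of_adj_A {i : ZMod n} {z : PVert n} (h : (propeller n b c d).Adj (A i) z) :
    z = A (i + 1) ∨ z = A (i - 1) ∨ z = B i ∨ z = B (i - b) := by
  obtain ⟨-, ⟨j, h⟩ | ⟨j, h⟩⟩ := h <;> grind

theorem eq_of_adj_C {i : ZMod n} {z : PVert n} (h : (propeller n b c d).Adj (C i) z) :
    z = B i ∨ z = B (i - c) ∨ z = C (i + d) ∨ z = C (i - d) := by
  obtain ⟨-, ⟨j, h⟩ | ⟨j, h⟩⟩ := h <;> grind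

section Orbit

variable {e₀ : Sym2 (PVert n)}

theorem autRel_of_propellerRel
    (hAA : (propeller n b c d).AutRel e₀ s(A 0, A 1))
    (hAB : (propeller n b c d).AutRel e₀ s(A 0, B 0))
    (hBA : (propeller n b c d).AutRel e₀ s(B 0, A b))
    (hBC : (propeller n b c d).AutRel e₀ s(B 0, C c))
    (hCB : (propeller n b c d).AutRel e₀ s(C 0, B 0))
    (hCC : (propeller n b c d).AutRel e₀ s(C 0, C d))
    {x y : PVert n} (h : propellerRel n b c d x y) : (propeller n b c d).AutRel e₀ s(x, y) := by
  obtain ⟨i, h⟩ := h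
  rcases h with ⟨rfl, rfl⟩ | ⟨rfl, rfl⟩ | ⟨rfl, rfl⟩ | ⟨rfl, rfl⟩ | ⟨rfl, rfl⟩ | ⟨rfl, rfl⟩
  · exact hAA.map_pair (rotation b c d i) (by simp) (by simp [add_comm])
  · exact hAB.map_pair (rotation b c d i) (by simp) (by simp)
  · exact hBA.map_pair (rotation b c d i) (by simp) (by simp [add_comm])
  · exact hBC.map_pair (rotation b c d i) (by simp) (by simp [add_comm])
  · exact hCB.map_pair (rotation b c d i) (by simp) (by simp)
  · exact hCC.map_pair (rotation b c d i) (by simp) (by simp [add_comm])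

theorem autRel_of_mem_edgeSet
    (hAA : (propeller n b c d).AutRel e₀ s(A 0, A 1))
    (hAB : (propeller n b c d).AutRel e₀ s(A 0, B 0))
    (hBA : (propeller n b c d).AutRel e₀ s(B 0, A b))
    (hBC : (propeller n b c d).AutRel e₀ s(B 0, C c))
    (hCB : (propeller n b c d).AutRel e₀ s(C 0, B 0))
    (hCC : (propeller n b c d).AutRel e₀ s(C 0, C d))
    {e : Sym2 (PVert n)} (he : e ∈ (propeller n b c d).edgeSet) :
    (propeller n b c d).AutRel e₀ e := by
  induction e using Sym2.ind with
  | _ x y =>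
    obtain ⟨-, h | h⟩ := he
    · exact autRel_of_propellerRel hAA hAB hBA hBC hCB hCC h
    · exact Sym2.eq_swap ▸ autRel_of_propellerRel hAA hAB hBA hBC hCB hCC h

theorem autRel_A_of_ne
    (hAA : (propeller n b c d).AutRel e₀ s(A 0, A 1))
    (hAB : (propeller n b c d).AutRel e₀ s(A 0, B 0))
    (i : ZMod n) (z : PVert n) (hz : (propeller n b c d).Adj (A i) z)
    (hzb : z ≠ B (i - b)) : (propeller n b c d).AutRel e₀ s(A i, z) := by
  rcases eq_of_adj_A hz with rfl | rfl | rfl | rfl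
  · exact hAA.map_pair (rotation b c d i) (by simp) (by simp [add_comm])
  · exact Sym2.eq_swap ▸ hAA.map_pair (rotation b c d (i - 1)) (by simp) (by simp)
  · exact hAB.map_pair (rotation b c d i) (by simp) (by simp)
  · exact absurd rfl hzb

theorem autRel_A
    (hAA : (propeller n b c d).AutRel e₀ s(A 0, A 1))
    (hAB : (propeller n b c d).AutRel e₀ s(A 0, B 0))
    (hBA : (propeller n b c d).AutRel e₀ s(B 0, A b))
    (i : ZMod n) (z : PVert n) (hz : (propeller n b c d).Adj (A i) z) :
    (propeller n b c d).AutRel e₀ s(A i, z) := by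
  by_cases hzb : z = B (i - b)
  · subst hzb
    exact Sym2.eq_swap ▸ hBA.map_pair (rotation b c d (i - b)) (by simp) (by simp)
  · exact autRel_A_of_ne hAA hAB i z hz hzb

theorem autRel_BC_and_CB
    (hAA : (propeller n b c d).AutRel e₀ s(A 0, A 1))
    (hAB : (propeller n b c d).AutRel e₀ s(A 0, B 0))
    {φ : propeller n b c d ≃g propeller n b c d} {i : ZMod n} (hφ : φ (A i) = B 0) :
    (propeller n b c d).AutRel e₀ s(B 0, C c) ∧ (propeller n b c d).AutRel e₀ s(C 0, B 0) := by
  have hBAadj : (propeller n b c d).Adj (B 0) (A b) := ⟨by simp, .inl ⟨0, by simp⟩⟩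
  have hBCadj : (propeller n b c d).Adj (B 0) (C c) := ⟨by simp, .inl ⟨0, by simp⟩⟩
  have hCBadj : (propeller n b c d).Adj (B 0) (C 0) := ⟨by simp, .inr ⟨0, by simp⟩⟩
  rw [Sym2.eq_swap (a := C 0)]
  by_cases hBA : (propeller n b c d).AutRel e₀ s(B 0, A b)
  · have hB := forall_adj_autRel_of_apply_eq hφ (autRel_A hAA hAB hBA i)
    exact ⟨hB _ hBCadj, hB _ hCBadj⟩
  · have hu := autRel_A_of_ne hAA hAB i
    exact ⟨(autRel_or_autRel_of_apply_eq hφ hu hBAadj hBCadj (by simp)).resolve_left hBA,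
      (autRel_or_autRel_of_apply_eq hφ hu hBAadj hCBadj (by simp)).resolve_left hBA⟩

theorem autRel_CC_and_BA
    (hAA : (propeller n b c d).AutRel e₀ s(A 0, A 1))
    (hAB : (propeller n b c d).AutRel e₀ s(A 0, B 0))
    (hBC : (propeller n b c d).AutRel e₀ s(B 0, C c))
    (hCB : (propeller n b c d).AutRel e₀ s(C 0, B 0))
    (hd : -d ≠ d) {ψ : propeller n b c d ≃g propeller n b c d} {i : ZMod n} (hψ : ψ (A i) = C 0) :
    (propeller n b c d).AutRel e₀ s(C 0, C d) ∧ (propeller n b c d).AutRel e₀ s(B 0, A b) := by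
  have hd0 : d ≠ 0 := by rintro rfl; simp at hd
  have hCdadj : (propeller n b c d).Adj (C 0) (C d) := ⟨by simpa using hd0.symm, .inl ⟨0, by simp⟩⟩
  have hCd'adj : (propeller n b c d).Adj (C 0) (C (-d)) := ⟨by simpa using hd0, .inr ⟨-d, by simp⟩⟩
  have hCC : (propeller n b c d).AutRel e₀ s(C 0, C d) := by
    rcases autRel_or_autRel_of_apply_eq hψ (autRel_A_of_ne hAA hAB i) hCdadj hCd'adj
      (by simpa using hd.symm) with h | h
    · exact h
    · exact Sym2.eq_swap ▸ h.map_pair (rotation b c d d) (by simp) (by simp)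
  have hC : ∀ z, (propeller n b c d).Adj (C 0) z → (propeller n b c d).AutRel e₀ s(C 0, z) := by
    intro z hz
    rcases eq_of_adj_C hz with rfl | rfl | rfl | rfl
    · exact Sym2.eq_swap ▸ hCB
    · exact Sym2.eq_swap ▸ hBC.map_pair (rotation b c d (-c)) (by simp) (by simp)
    · simpa using hCC
    · exact Sym2.eq_swap ▸ hCC.map_pair (rotation b c d (-d)) (by simp) (by simp)
  have hAi := forall_adj_autRel_of_apply_eq (ψ.symm_apply_eq.mpr hψ.symm) hC
  have hAB' := hAi _ (⟨by simp, .inr ⟨i - b, by simp⟩⟩ : (propeller n b c d).Adj (A i) (B (i - b)))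
  exact ⟨hCC, Sym2.eq_swap ▸ hAB'.map_pair (rotation b c d (b - i)) (by simp) (by simp)⟩

end Orbit

theorem edgeTransitive_of_apply_eq (hd : -d ≠ d) (φ : propeller n b c d ≃g propeller n b c d)
    (hφ₀ : φ (A 0) = A 0) (hφ₁ : φ (A 1) = B 0) : EdgeTransitive (propeller n b c d) := by
  have hAA : (propeller n b c d).AutRel s(A 0, A 1) s(A 0, A 1) := .refl _
  have hAB : (propeller n b c d).AutRel s(A 0, A 1) s(A 0, B 0) := ⟨φ, by simp [hφ₀, hφ₁]⟩
  obtain ⟨hBC, hCB⟩ := autRel_BC_and_CB hAA hAB hφ₁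
  obtain ⟨ψ, i, hψ⟩ : ∃ ψ : propeller n b c d ≃g propeller n b c d, ∃ i, ψ (A i) = C 0 := by
    obtain ⟨ψ, h | h⟩ := hCB.exists_apply_eq
    exacts [⟨ψ, 0, h.1⟩, ⟨ψ, 1, h.2⟩]
  obtain ⟨hCC, hBA⟩ := autRel_CC_and_BA hAA hAB hBC hCB hd hψ
  exact edgeTransitive_of_forall_autRel _ fun _ ↦ autRel_of_mem_edgeSet hAA hAB hBA hBC hCB hCC

end Propeller

open Propeller

theorem propeller_edgeTransitive_iff_wing_to_flat_general
    (n b c d : ℕ) (hn : 3 ≤ n)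
    (hd : 0 < d ∧ d < n) (hd2 : 2 * d ≠ n) :
    EdgeTransitive (propeller n b c d) ↔
      ∃ φ : propeller n b c d ≃g propeller n b c d, φ (A 0) = A 0 ∧ φ (A 1) = B 0 := by
  refine ⟨fun h ↦ ?_, fun ⟨φ, hφ₀, hφ₁⟩ ↦
    edgeTransitive_of_apply_eq (ZMod.neg_natCast_ne_natCast hd hd2) φ hφ₀ hφ₁⟩
  have : Fact (1 < n) := ⟨lt_of_lt_of_le (by norm_num) hn⟩
  have hadjAA : (propeller n b c d).Adj (A 0) (A 1) := ⟨by simp, .inl ⟨0, by simp⟩⟩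
  have hadjAB : (propeller n b c d).Adj (A 0) (B 0) := ⟨by simp, .inl ⟨0, by simp⟩⟩
  exact AutRel.exists_apply_eq_of_swap (h _ hadjAA _ hadjAB) (reflection _ _ _) (by simp) (by simp)

/-- a propeller graph is edge-transitive iff it admits an automorphism sending
the arc `(A_0, A_1)` to the arc `(A_0, B_0)`. -/
theorem propeller_edgeTransitive_iff_wing_to_flat
    (n b c d : ℕ) (hn : 3 ≤ n) (hb : 0 < b ∧ b < n) (hc : 0 < c ∧ c < n)
    (hd : 0 < d ∧ d < n) (hd2 : 2 * d ≠ n) :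
    EdgeTransitive (propeller n b c d) ↔
      ∃ φ : propeller n b c d ≃g propeller n b c d, φ (A 0) = A 0 ∧ φ (A 1) = B 0 :=
  propeller_edgeTransitive_iff_wing_to_flat_general n b c d hn hd hd2
end

section
/- Every edge-transitive propeller graph is arc-transitive. -/
open PVert

/-- A graph is arc-transitive if its automorphism group acts transitively on ordered pairs of
adjacent vertices. -/
def ArcTransitive {V : Type*} (G : SimpleGraph V) : Prop :=
  ∀ u v x y : V, G.Adj u v → G.Adj x y → ∃ φ : G ≃g G, φ u = x ∧ φ v = y

/-!
An edge-transitive graph is arc-transitive as soon as one edge is reversed by an automorphism: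
conjugating that automorphism by the ones moving this edge reverses every edge, and composing with
such a reversal fixes the orientation of any edge map. In `Pr_n(b,c,d)` the reflection
`A i ↦ A (1 - i)`, `B i ↦ B (1 - i - b)`, `C i ↦ C (1 - i - b + c)` is an automorphism for all
parameters, and it reverses the rim edge `{A 0, A 1}`.
-/

namespace SimpleGraph

variable {V : Type*} {G : SimpleGraph V}

def Iso.ofInvolutive {f : V → V} (hf : Function.Involutive f)
    (hadj : ∀ {u v}, G.Adj u v → G.Adj (f u) (f v)) : G ≃g G where
  toEquiv := hf.toPerm
  map_rel_iff' {u v} := ⟨fun h => by simpa [hf u, hf v] using hadj h, hadj⟩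

@[simp]
lemma Iso.ofInvolutive_apply {f : V → V} (hf : Function.Involutive f)
    (hadj : ∀ {u v}, G.Adj u v → G.Adj (f u) (f v)) (v : V) : Iso.ofInvolutive hf hadj v = f v :=
  rfl

end SimpleGraph

section

variable {V : Type*} {G : SimpleGraph V}

lemma EdgeTransitive.exists_swap (hG : EdgeTransitive G) {u v : V} (huv : G.Adj u v)
    {σ : G ≃g G} (hσu : σ u = v) (hσv : σ v = u) {x y : V} (hxy : G.Adj x y) :
    ∃ ψ : G ≃g G, ψ x = y ∧ ψ y = x := by
  obtain ⟨χ, hχ⟩ := hG s(u, v) huv s(x, y) hxy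
  rw [Sym2.map_mk, Sym2.eq_iff] at hχ
  refine ⟨(χ.symm.trans σ).trans χ, ?_⟩
  simp only [RelIso.trans_apply]
  rcases hχ with ⟨rfl, rfl⟩ | ⟨rfl, rfl⟩ <;> simp [hσu, hσv]

lemma EdgeTransitive.arcTransitive (hG : EdgeTransitive G) {u v : V} (huv : G.Adj u v)
    {σ : G ≃g G} (hσu : σ u = v) (hσv : σ v = u) : ArcTransitive G := by
  intro u' v' x y huv' hxy
  obtain ⟨φ, hφ⟩ := hG s(u', v') huv' s(x, y) hxy
  rw [Sym2.map_mk, Sym2.eq_iff] at hφ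
  rcases hφ with ⟨hu', hv'⟩ | ⟨hu', hv'⟩
  · exact ⟨φ, hu', hv'⟩
  · obtain ⟨ψ, hψx, hψy⟩ := hG.exists_swap huv hσu hσv hxy
    exact ⟨φ.trans ψ, by simp [hu', hψy], by simp [hv', hψx]⟩

end

namespace PVert

variable {n : ℕ} {b c d : ZMod n}

def reflect (b c : ZMod n) : PVert n → PVert n
  | A i => A (1 - i)
  | B i => B (1 - i - b)
  | C i => C (1 - i - b + c)

lemma reflect_involutive (b c : ZMod n) : Function.Involutive (reflect b c) := by
  rintro (i | i | i) <;> simp only [reflect] <;> ring_nf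

lemma propellerRel_reflect {u v : PVert n} (h : propellerRel n b c d u v) :
    propellerRel n b c d (reflect b c v) (reflect b c u) := by
  obtain ⟨i, ⟨rfl, rfl⟩ | ⟨rfl, rfl⟩ | ⟨rfl, rfl⟩ | ⟨rfl, rfl⟩ | ⟨rfl, rfl⟩ | ⟨rfl, rfl⟩⟩ := h
  · exact ⟨-i, .inl ⟨congrArg A (by ring), congrArg A (by ring)⟩⟩
  · exact ⟨1 - i - b, .inr <| .inr <| .inl ⟨rfl, congrArg A (by ring)⟩⟩
  · exact ⟨1 - i - b, .inr <| .inl ⟨congrArg A (by ring), rfl⟩⟩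
  · exact ⟨1 - i - b, .inr <| .inr <| .inr <| .inr <| .inl ⟨congrArg C (by ring), rfl⟩⟩
  · exact ⟨1 - i - b, .inr <| .inr <| .inr <| .inl ⟨rfl, congrArg C (by ring)⟩⟩
  · exact ⟨1 - i - d - b + c, .inr <| .inr <| .inr <| .inr <| .inr
      ⟨congrArg C (by ring), congrArg C (by ring)⟩⟩

lemma propeller_adj_reflect {u v : PVert n} (h : (propeller n b c d).Adj u v) :
    (propeller n b c d).Adj (reflect b c u) (reflect b c v) :=
  ⟨(reflect_involutive b c).injective.ne h.1,
    h.2.symm.imp propellerRel_reflect propellerRel_reflect⟩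

end PVert

open PVert

def propellerReflection (n : ℕ) (b c d : ZMod n) : propeller n b c d ≃g propeller n b c d :=
  .ofInvolutive (reflect_involutive b c) propeller_adj_reflect

lemma propeller_adj_A_zero_one {n : ℕ} [Fact (1 < n)] (b c d : ZMod n) :
    (propeller n b c d).Adj (A 0) (A 1) :=
  ⟨by simp, .inl ⟨0, .inl ⟨rfl, by rw [zero_add]⟩⟩⟩

theorem propeller_edgeTransitive_arcTransitive_general
    (n b c d : ℕ) (hn : 3 ≤ n)
    (hET : EdgeTransitive (propeller n b c d)) :
    ArcTransitive (propeller n b c d) := by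
  have : Fact (1 < n) := ⟨by omega⟩
  exact hET.arcTransitive (propeller_adj_A_zero_one _ _ _)
    (σ := propellerReflection n b c d) (by simp [propellerReflection, reflect])
    (by simp [propellerReflection, reflect])

/-- every edge-transitive propeller graph is arc-transitive. -/
theorem propeller_edgeTransitive_arcTransitive
    (n b c d : ℕ) (hn : 3 ≤ n) (hb : 0 < b ∧ b < n) (hc : 0 < c ∧ c < n)
    (hd : 0 < d ∧ d < n) (hd2 : 2 * d ≠ n)
    (hET : EdgeTransitive (propeller n b c d)) :
    ArcTransitive (propeller n b c d) :=
  propeller_edgeTransitive_arcTransitive_general n b c d hn hET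
end

section
/- If n = 2m, d² ≡ 1 (mod n), then the permutation σ₁ defined by: for even i, A_i ↦ A_{id}, B_i ↦ A_{id+1}, C_i ↦ B_{id+1-2d}; and for odd i, A_i ↦ B_{(i-1)d}, B_i ↦ C_{(i-1)d+2}, C_i ↦ C_{(i-1)d+2-d}; is a graph automorphism of the propeller graph Pr_{2m}(2d,2,d). -/
open PVert

namespace ZMod

variable {n : ℕ} (hn : 2 ∣ n)
include hn

theorem even_val_iff_castHom_eq_zero (x : ZMod n) :
    Even x.val ↔ castHom hn (ZMod 2) x = 0 := by
  rcases n with _ | n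
  · exact Int.natAbs_even.trans (intCast_eq_zero_iff_even (n := x)).symm
  · rw [castHom_apply, ← natCast_val, natCast_eq_zero_iff_even]

theorem castHom_two_eq_zero_or_eq_one (x : ZMod n) :
    castHom hn (ZMod 2) x = 0 ∨ castHom hn (ZMod 2) x = 1 := by
  generalize castHom hn (ZMod 2) x = y
  decide +revert

theorem castHom_two_eq_one_of_sq_eq_one {x : ZMod n} (hx : x ^ 2 = 1) :
    castHom hn (ZMod 2) x = 1 := by
  have h : castHom hn (ZMod 2) x ^ 2 = 1 := by rw [← map_pow, hx, map_one]
  generalize castHom hn (ZMod 2) x = y at h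
  decide +revert

end ZMod

def SimpleGraph.Iso.ofInvolutive_s10 {V : Type*} {G : SimpleGraph V} {f : V → V}
    (hf : Function.Involutive f) (hG : ∀ {u v}, G.Adj u v → G.Adj (f u) (f v)) : G ≃g G where
  toEquiv := hf.toPerm f
  map_rel_iff' {u v} := ⟨fun h => by simpa only [hf.coe_toPerm, hf u, hf v] using hG h, hG⟩

theorem SimpleGraph.fromRel_adj_map {V : Type*} {r : V → V → Prop} {f : V → V}
    (hf : Function.Injective f) (hr : ∀ {u v}, r u v → r (f u) (f v)) {u v : V}
    (h : (fromRel r).Adj u v) : (fromRel r).Adj (f u) (f v) := by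
  obtain ⟨hne, huv | hvu⟩ := h
  · exact ⟨hf.ne hne, .inl (hr huv)⟩
  · exact ⟨hf.ne hne, .inr (hr hvu)⟩

theorem propeller_eq_fromRel (n : ℕ) (b c d : ZMod n) :
    propeller n b c d = SimpleGraph.fromRel (propellerRel n b c d) := rfl

namespace PVert

variable {n : ℕ} {b c d i j : ZMod n}

@[simp] theorem propellerRel_A_A : propellerRel n b c d (A i) (A j) ↔ j = i + 1 := by
  simp [propellerRel]

@[simp] theorem propellerRel_A_B : propellerRel n b c d (A i) (B j) ↔ j = i := by
  simp [propellerRel]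

@[simp] theorem propellerRel_B_A : propellerRel n b c d (B i) (A j) ↔ j = i + b := by
  simp [propellerRel]

@[simp] theorem propellerRel_B_C : propellerRel n b c d (B i) (C j) ↔ j = i + c := by
  simp [propellerRel]

@[simp] theorem propellerRel_C_B : propellerRel n b c d (C i) (B j) ↔ j = i := by
  simp [propellerRel]

@[simp] theorem propellerRel_C_C : propellerRel n b c d (C i) (C j) ↔ j = i + d := by
  simp [propellerRel]

end PVert

def propellerSigma₁ {n : ℕ} (d : ZMod n) : PVert n → PVert n
  | A i => if Even i.val then A (i * d) else B ((i - 1) * d)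
  | B i => if Even i.val then A (i * d + 1) else C ((i - 1) * d + 2)
  | C i => if Even i.val then B (i * d + 1 - 2 * d) else C ((i - 1) * d + 2 - d)

section

variable {n : ℕ} (hn : 2 ∣ n) {d : ZMod n} (hd : d ^ 2 = 1)
include hn hd

theorem propellerSigma₁_involutive : Function.Involutive (propellerSigma₁ d) := by
  have hd_odd := ZMod.castHom_two_eq_one_of_sq_eq_one hn hd
  rintro (i | i | i) <;> rcases ZMod.castHom_two_eq_zero_or_eq_one hn i with hi | hi <;>
    simp +decide only [propellerSigma₁, ZMod.even_val_iff_castHom_eq_zero hn, map_add, map_sub,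
      map_mul, map_one, map_ofNat, hi, hd_odd, ite_true, ite_false, A.injEq, B.injEq, C.injEq]
  · linear_combination i * hd
  · linear_combination (i - 1) * hd
  · linear_combination i * hd
  · linear_combination (i - 1) * hd
  · linear_combination (i - 2) * hd
  · linear_combination (i - 2) * hd

theorem propellerRel_propellerSigma₁ {u v : PVert n} (h : propellerRel n (2 * d) 2 d u v) :
    propellerRel n (2 * d) 2 d (propellerSigma₁ d u) (propellerSigma₁ d v) := by
  have hd_odd := ZMod.castHom_two_eq_one_of_sq_eq_one hn hd
  obtain ⟨i, ⟨rfl, rfl⟩ | ⟨rfl, rfl⟩ | ⟨rfl, rfl⟩ | ⟨rfl, rfl⟩ | ⟨rfl, rfl⟩ | ⟨rfl, rfl⟩⟩ := h <;>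
    rcases ZMod.castHom_two_eq_zero_or_eq_one hn i with hi | hi <;>
    simp +decide only [propellerSigma₁, ZMod.even_val_iff_castHom_eq_zero hn, map_add, map_mul,
      map_one, map_ofNat, hi, hd_odd, ite_true, ite_false, propellerRel_A_A, propellerRel_A_B,
      propellerRel_B_A, propellerRel_B_C, propellerRel_C_B, propellerRel_C_C] <;>
    first | ring1 | linear_combination hd | linear_combination 2 * hd

end

theorem propeller_family1_automorphism_general
    (m d : ℕ) (hd2 : (d : ZMod (2 * m)) ^ 2 = 1) :
    ∃ φ : propeller (2 * m) (2 * d) 2 d ≃g propeller (2 * m) (2 * d) 2 d,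
      ∀ i : ZMod (2 * m),
        (Even i.val →
          φ (A i) = A (i * (d : ZMod (2 * m))) ∧
          φ (B i) = A (i * (d : ZMod (2 * m)) + 1) ∧
          φ (C i) = B (i * (d : ZMod (2 * m)) + 1 - 2 * (d : ZMod (2 * m)))) ∧
        (¬ Even i.val →
          φ (A i) = B ((i - 1) * (d : ZMod (2 * m))) ∧
          φ (B i) = C ((i - 1) * (d : ZMod (2 * m)) + 2) ∧
          φ (C i) = C ((i - 1) * (d : ZMod (2 * m)) + 2 - (d : ZMod (2 * m)))) := by
  have hn : 2 ∣ 2 * m := dvd_mul_right 2 m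
  have hinv := propellerSigma₁_involutive hn hd2
  refine ⟨.ofInvolutive hinv ?_, fun i => ⟨fun hi => ?_, fun hi => ?_⟩⟩
  · rw [propeller_eq_fromRel]
    exact SimpleGraph.fromRel_adj_map hinv.injective
      fun h => propellerRel_propellerSigma₁ hn hd2 h
  · exact ⟨if_pos hi, if_pos hi, if_pos hi⟩
  · exact ⟨if_neg hi, if_neg hi, if_neg hi⟩

/-- if `n = 2m` and `d² ≡ 1 (mod n)`, then the permutation `σ₁` (defined by
parity on `i`) is a graph automorphism of `Pr_{2m}(2d, 2, d)`. -/
theorem propeller_family1_automorphism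
    (m d : ℕ) (hm : 2 ≤ m) (hd : 0 < d ∧ d < 2 * m) (hdm : d ≠ m)
    (hd2 : (d : ZMod (2 * m)) ^ 2 = 1) :
    ∃ φ : propeller (2 * m) (2 * d) 2 d ≃g propeller (2 * m) (2 * d) 2 d,
      ∀ i : ZMod (2 * m),
        (Even i.val →
          φ (A i) = A (i * (d : ZMod (2 * m))) ∧
          φ (B i) = A (i * (d : ZMod (2 * m)) + 1) ∧
          φ (C i) = B (i * (d : ZMod (2 * m)) + 1 - 2 * (d : ZMod (2 * m)))) ∧
        (¬ Even i.val →
          φ (A i) = B ((i - 1) * (d : ZMod (2 * m))) ∧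
          φ (B i) = C ((i - 1) * (d : ZMod (2 * m)) + 2) ∧
          φ (C i) = C ((i - 1) * (d : ZMod (2 * m)) + 2 - (d : ZMod (2 * m)))) :=
  propeller_family1_automorphism_general m d hd2
end

section
/- If n = 2m and d² ≡ -1 (mod n), then the permutation σ₂ defined by: for even i, A_i ↦ A_{id}, B_i ↦ A_{id-1}, C_i ↦ B_{id-1-2d}; and for odd i, A_i ↦ B_{(i-1)d}, B_i ↦ C_{(i-1)d}, C_i ↦ C_{(i-1)d-d}; is a graph automorphism of the propeller graph Pr_{2m}(2d,2,d). -/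
open PVert

/-!
`σ₂` has order four (`σ₂²` sends `A i ↦ A (-i)`, because `d² = -1`), so its inverse `σ₂³`
is again an endomorphism and it suffices to check that `σ₂` maps every edge to an edge.
Which formula applies at an index only depends on its parity, and since `d` is odd the parity
of every index occurring is determined by that of `i`; each check then reduces to a ring
identity in `ZMod n` modulo `d² = -1`.
-/

namespace SimpleGraph

variable {V W : Type*}

def Hom.ofFromRel {r : V → V → Prop} {s : W → W → Prop} (f : V → W) (hf : f.Injective)
    (h : ∀ u v, r u v → s (f u) (f v) ∨ s (f v) (f u)) : fromRel r →g fromRel s where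
  toFun := f
  map_rel' {u v} := fun ⟨hne, huv⟩ => ⟨hf.ne hne, huv.elim (h u v) fun hvu => (h v u hvu).symm⟩

variable {G : SimpleGraph V}

theorem Hom.adj_iterate (f : G →g G) (k : ℕ) {u v : V} (h : G.Adj u v) :
    G.Adj (f^[k] u) (f^[k] v) := by
  induction k generalizing u v with
  | zero => exact h
  | succ k ih => exact ih (f.map_adj h)

def Hom.isoOfIterateEqId (f : G →g G) {k : ℕ} (hk : (⇑f)^[k + 1] = id) : G ≃g G where
  toFun := f
  invFun := (⇑f)^[k]
  left_inv u := congrFun hk u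
  right_inv u := by rw [← Function.iterate_succ_apply' f k u, hk, id]
  map_rel_iff' {u v} := by
    refine ⟨fun h => ?_, f.map_adj⟩
    have h' : G.Adj ((⇑f)^[k + 1] u) ((⇑f)^[k + 1] v) := f.adj_iterate k h
    rwa [hk] at h'

end SimpleGraph

section PropellerRel

variable {n : ℕ} {b c d i j : ZMod n}

@[simp] theorem propellerRel_A_A : propellerRel n b c d (A i) (A j) ↔ j = i + 1 := by
  simp [propellerRel]

@[simp] theorem propellerRel_A_B : propellerRel n b c d (A i) (B j) ↔ j = i := by
  simp [propellerRel, eq_comm]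

@[simp] theorem propellerRel_B_A : propellerRel n b c d (B i) (A j) ↔ j = i + b := by
  simp [propellerRel]

@[simp] theorem propellerRel_B_C : propellerRel n b c d (B i) (C j) ↔ j = i + c := by
  simp [propellerRel]

@[simp] theorem propellerRel_C_B : propellerRel n b c d (C i) (B j) ↔ j = i := by
  simp [propellerRel, eq_comm]

@[simp] theorem propellerRel_C_C : propellerRel n b c d (C i) (C j) ↔ j = i + d := by
  simp [propellerRel]

end PropellerRel

theorem ZMod.eq_zero_or_eq_one (x : ZMod 2) : x = 0 ∨ x = 1 := by
  revert x; decide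

theorem ZMod.even_val_iff_castHom_eq_zero_s12 {n : ℕ} [NeZero n] (hn : 2 ∣ n) (i : ZMod n) :
    Even i.val ↔ ZMod.castHom hn (ZMod 2) i = 0 := by
  rw [ZMod.castHom_apply, ← ZMod.natCast_val, ZMod.natCast_eq_zero_iff, even_iff_two_dvd]

theorem ZMod.castHom_two_eq_one_of_sq_eq_neg_one {n : ℕ} (hn : 2 ∣ n) {x : ZMod n}
    (hx : x ^ 2 = -1) : ZMod.castHom hn (ZMod 2) x = 1 := by
  have h := congrArg (ZMod.castHom hn (ZMod 2)) hx
  rw [map_pow, map_neg, map_one] at h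
  revert h; generalize ZMod.castHom hn (ZMod 2) x = y; revert y; decide

def propellerSigma2 {n : ℕ} (d : ZMod n) : PVert n → PVert n
  | A i => if Even i.val then A (i * d) else B ((i - 1) * d)
  | B i => if Even i.val then A (i * d - 1) else C ((i - 1) * d)
  | C i => if Even i.val then B (i * d - 1 - 2 * d) else C ((i - 1) * d - d)

section PropellerSigma2

variable {n : ℕ} [NeZero n] (hn : 2 ∣ n) {d : ZMod n} (hd : d ^ 2 = -1)
include hn hd

theorem propellerSigma2_iterate_four : (propellerSigma2 d)^[4] = id := by
  have hd_odd := ZMod.castHom_two_eq_one_of_sq_eq_neg_one hn hd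
  funext u
  rcases u with i | i | i <;>
    rcases ZMod.eq_zero_or_eq_one (ZMod.castHom hn (ZMod 2) i) with hi | hi <;>
    -- without `ZMod.castHom_apply`, simp pushes the parity hom through each index and decides it
    simp +decide [propellerSigma2, ZMod.even_val_iff_castHom_eq_zero_s12 hn, hi, hd_odd, map_ofNat,
      -ZMod.castHom_apply] <;>
    grind

theorem propellerSigma2_rel {u v : PVert n} (h : propellerRel n (2 * d) 2 d u v) :
    propellerRel n (2 * d) 2 d (propellerSigma2 d u) (propellerSigma2 d v) ∨
      propellerRel n (2 * d) 2 d (propellerSigma2 d v) (propellerSigma2 d u) := by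
  have hd_odd := ZMod.castHom_two_eq_one_of_sq_eq_neg_one hn hd
  obtain ⟨i, ⟨rfl, rfl⟩ | ⟨rfl, rfl⟩ | ⟨rfl, rfl⟩ | ⟨rfl, rfl⟩ | ⟨rfl, rfl⟩ | ⟨rfl, rfl⟩⟩ := h <;>
    rcases ZMod.eq_zero_or_eq_one (ZMod.castHom hn (ZMod 2) i) with hi | hi <;>
    simp +decide [propellerSigma2, ZMod.even_val_iff_castHom_eq_zero_s12 hn, hi, hd_odd, map_ofNat,
      -ZMod.castHom_apply] <;>
    grind

-- `propeller n b c d` is definitionally `SimpleGraph.fromRel (propellerRel n b c d)`.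
def propellerSigma2Hom : propeller n (2 * d) 2 d →g propeller n (2 * d) 2 d :=
  SimpleGraph.Hom.ofFromRel (propellerSigma2 d)
    (Function.LeftInverse.injective (g := (propellerSigma2 d)^[3])
      (congrFun (propellerSigma2_iterate_four hn hd)))
    (fun _ _ => propellerSigma2_rel hn hd)

def propellerSigma2Iso : propeller n (2 * d) 2 d ≃g propeller n (2 * d) 2 d :=
  (propellerSigma2Hom hn hd).isoOfIterateEqId (propellerSigma2_iterate_four hn hd)

end PropellerSigma2

theorem propeller_family2_automorphism_general
    (m d : ℕ)
    (hd2 : (d : ZMod (2 * m)) ^ 2 = -1) :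
    ∃ φ : propeller (2 * m) (2 * d) 2 d ≃g propeller (2 * m) (2 * d) 2 d,
      ∀ i : ZMod (2 * m),
        (Even i.val →
          φ (A i) = A (i * (d : ZMod (2 * m))) ∧
          φ (B i) = A (i * (d : ZMod (2 * m)) - 1) ∧
          φ (C i) = B (i * (d : ZMod (2 * m)) - 1 - 2 * (d : ZMod (2 * m)))) ∧
        (¬ Even i.val →
          φ (A i) = B ((i - 1) * (d : ZMod (2 * m))) ∧
          φ (B i) = C ((i - 1) * (d : ZMod (2 * m))) ∧
          φ (C i) = C ((i - 1) * (d : ZMod (2 * m)) - (d : ZMod (2 * m)))) := by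
  -- `ZMod 0` is `ℤ`, where `-1` is not a square
  have : NeZero (2 * m) := ⟨fun h => by
    obtain rfl : m = 0 := by omega
    have hd2ℤ : (d : ℤ) ^ 2 = -1 := hd2
    nlinarith⟩
  refine ⟨propellerSigma2Iso (dvd_mul_right 2 m) hd2, fun i => ⟨fun hi => ?_, fun hi => ?_⟩⟩
  · exact ⟨if_pos hi, if_pos hi, if_pos hi⟩
  · exact ⟨if_neg hi, if_neg hi, if_neg hi⟩

/-- if `n = 2m` and `d² ≡ -1 (mod n)`, then the permutation `σ₂` (defined by
parity on `i`) is a graph automorphism of `Pr_{2m}(2d, 2, d)`. -/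
theorem propeller_family2_automorphism
    (m d : ℕ) (hm : 2 ≤ m) (hd : 0 < d ∧ d < 2 * m) (hdm : d ≠ m)
    (hd2 : (d : ZMod (2 * m)) ^ 2 = -1) :
    ∃ φ : propeller (2 * m) (2 * d) 2 d ≃g propeller (2 * m) (2 * d) 2 d,
      ∀ i : ZMod (2 * m),
        (Even i.val →
          φ (A i) = A (i * (d : ZMod (2 * m))) ∧
          φ (B i) = A (i * (d : ZMod (2 * m)) - 1) ∧
          φ (C i) = B (i * (d : ZMod (2 * m)) - 1 - 2 * (d : ZMod (2 * m)))) ∧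
        (¬ Even i.val →
          φ (A i) = B ((i - 1) * (d : ZMod (2 * m))) ∧
          φ (B i) = C ((i - 1) * (d : ZMod (2 * m))) ∧
          φ (C i) = C ((i - 1) * (d : ZMod (2 * m)) - (d : ZMod (2 * m)))) :=
  propeller_family2_automorphism_general m d hd2
end

section
/- If b ≡ -1 (mod n) and c ≡ -d (mod n), then the propeller graph Pr_n(b,c,d) is isomorphic to the line graph of the generalized Petersen graph GP(n,d), via the map sending A_i to the edge {u_i,u_{i+1}}, B_i to the edge {u_i,v_i}, and C_i to the edge {v_i,v_{i+d}}. -/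
open PVert

/-- One-directional edge relation of the generalized Petersen graph `GP(n,d)`:
outer vertices `u_i = Sum.inl i`, inner vertices `v_i = Sum.inr i`. -/
def genPetersenRel (n : ℕ) (d : ZMod n) (x y : ZMod n ⊕ ZMod n) : Prop :=
  ∃ i : ZMod n,
    (x = Sum.inl i ∧ y = Sum.inl (i + 1)) ∨ (x = Sum.inl i ∧ y = Sum.inr i) ∨
    (x = Sum.inr i ∧ y = Sum.inr (i + d))

/-- The generalized Petersen graph `GP(n,d)`. -/
def genPetersen (n : ℕ) (d : ZMod n) : SimpleGraph (ZMod n ⊕ ZMod n) where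
  Adj x y := x ≠ y ∧ (genPetersenRel n d x y ∨ genPetersenRel n d y x)
  symm := ⟨fun _ _ h => ⟨h.1.symm, h.2.symm⟩⟩
  loopless := ⟨fun _ h => h.1 rfl⟩

open Function

noncomputable def SimpleGraph.Iso.toLineGraph {V W : Type*} {H : SimpleGraph V}
    {G : SimpleGraph W} (f : V → Sym2 W) (hf : Injective f) (hrange : Set.range f = G.edgeSet)
    (hadj : ∀ x y, H.Adj x y ↔ x ≠ y ∧ ∃ w, w ∈ f x ∧ w ∈ f y) : H ≃g G.lineGraph where
  toEquiv := (Equiv.ofInjective f hf).trans (Equiv.setCongr hrange)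
  map_rel_iff' {x y} := by
    rw [SimpleGraph.lineGraph_adj_iff_exists, hadj, Ne, EmbeddingLike.apply_eq_iff_eq]
    rfl

lemma ZMod.natCast_ne_zero_of_pos_of_lt {a n : ℕ} (ha : 0 < a) (han : a < n) :
    (a : ZMod n) ≠ 0 := by
  rw [Ne, ZMod.natCast_eq_zero_iff]
  exact fun h => (Nat.le_of_dvd ha h).not_gt han

namespace PVert

variable {n : ℕ}

def toGenPetersenEdge (d : ZMod n) : PVert n → Sym2 (ZMod n ⊕ ZMod n)
  | A i => s(.inl i, .inl (i + 1))
  | B i => s(.inl i, .inr i)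
  | C i => s(.inr i, .inr (i + d))

lemma toGenPetersenEdge_injective {d : ZMod n} (h2 : (2 : ZMod n) ≠ 0) (hd : 2 * d ≠ 0) :
    Injective (toGenPetersenEdge d) := by
  rintro (i | i | i) (j | j | j) h <;>
    simp only [toGenPetersenEdge, Sym2.eq_iff, Sum.inl.injEq, Sum.inr.injEq, reduceCtorEq, A.injEq,
      B.injEq, C.injEq, add_left_inj, and_self, and_false, false_and, or_self, or_false] at h ⊢
  case B.B => exact h
  case A.A => rcases h with h | ⟨rfl, h⟩; exacts [h, absurd (by linear_combination h) h2]
  case C.C => rcases h with h | ⟨rfl, h⟩; exacts [h, absurd (by linear_combination h) hd]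

lemma range_toGenPetersenEdge {d : ZMod n} (h1 : (1 : ZMod n) ≠ 0) (hd : d ≠ 0) :
    Set.range (toGenPetersenEdge d) = (genPetersen n d).edgeSet := by
  refine Set.Subset.antisymm (Set.range_subset_iff.2 ?_) ?_
  · rintro (i | i | i) <;> refine ⟨by simp [h1, hd], .inl ⟨i, by simp⟩⟩
  · intro e he
    induction e using Sym2.ind with | _ x y => ?_
    rcases he with ⟨-, ⟨i, h⟩ | ⟨i, h⟩⟩ <;> rcases h with ⟨rfl, rfl⟩ | ⟨rfl, rfl⟩ | ⟨rfl, rfl⟩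
    exacts [⟨A i, rfl⟩, ⟨B i, rfl⟩, ⟨C i, rfl⟩, ⟨A i, Sym2.eq_swap⟩, ⟨B i, Sym2.eq_swap⟩,
      ⟨C i, Sym2.eq_swap⟩]

lemma exists_mem_toGenPetersenEdge_iff (d : ZMod n) (x y : PVert n) :
    (∃ w, w ∈ toGenPetersenEdge d x ∧ w ∈ toGenPetersenEdge d y) ↔
      x = y ∨ propellerRel n (-1) (-d) d x y ∨ propellerRel n (-1) (-d) d y x := by
  rcases x with (i | i | i) <;> rcases y with (j | j | j) <;>
    simp [toGenPetersenEdge, propellerRel] <;> grind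

lemma propeller_adj_iff_exists_mem_toGenPetersenEdge (d : ZMod n) (x y : PVert n) :
    (propeller n (-1) (-d) d).Adj x y ↔
      x ≠ y ∧ ∃ w, w ∈ toGenPetersenEdge d x ∧ w ∈ toGenPetersenEdge d y := by
  rw [exists_mem_toGenPetersenEdge_iff]
  exact and_congr_right fun hne => (or_iff_right hne).symm

end PVert

theorem propeller_girth3_iso_lineGraph_genPetersen_general
    (n b c d : ℕ) (hd : 0 < d ∧ 2 * d < n)
    (hb : (b : ZMod n) = -1) (hc : (c : ZMod n) = -(d : ZMod n)) :
    ∃ φ : propeller n b c d ≃g (genPetersen n d).lineGraph,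
      ∀ i : ZMod n,
        (φ (A i) : Sym2 (ZMod n ⊕ ZMod n)) = s(Sum.inl i, Sum.inl (i + 1)) ∧
        (φ (B i) : Sym2 (ZMod n ⊕ ZMod n)) = s(Sum.inl i, Sum.inr i) ∧
        (φ (C i) : Sym2 (ZMod n ⊕ ZMod n)) = s(Sum.inr i, Sum.inr (i + (d : ZMod n))) := by
  have h1 : (1 : ZMod n) ≠ 0 := by
    exact_mod_cast ZMod.natCast_ne_zero_of_pos_of_lt one_pos (by omega)
  have h2 : (2 : ZMod n) ≠ 0 := by
    exact_mod_cast ZMod.natCast_ne_zero_of_pos_of_lt two_pos (by omega)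
  have h2d : 2 * (d : ZMod n) ≠ 0 := by
    exact_mod_cast ZMod.natCast_ne_zero_of_pos_of_lt (by omega) hd.2
  rw [hb, hc]
  exact ⟨.toLineGraph _ (toGenPetersenEdge_injective h2 h2d)
      (range_toGenPetersenEdge h1 (right_ne_zero_of_mul h2d))
      (propeller_adj_iff_exists_mem_toGenPetersenEdge _),
    fun i => ⟨rfl, rfl, rfl⟩⟩

/-- if `b ≡ -1` and `c ≡ -d (mod n)`, then `Pr_n(b,c,d)` is isomorphic to the
line graph of `GP(n,d)`, via `A_i ↦ {u_i,u_{i+1}}`, `B_i ↦ {u_i,v_i}`, `C_i ↦ {v_i,v_{i+d}}`. -/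
theorem propeller_girth3_iso_lineGraph_genPetersen
    (n b c d : ℕ) (hn : 3 ≤ n) (hd : 0 < d ∧ 2 * d < n)
    (hb : (b : ZMod n) = -1) (hc : (c : ZMod n) = -(d : ZMod n)) :
    ∃ φ : propeller n b c d ≃g (genPetersen n d).lineGraph,
      ∀ i : ZMod n,
        (φ (A i) : Sym2 (ZMod n ⊕ ZMod n)) = s(Sum.inl i, Sum.inl (i + 1)) ∧
        (φ (B i) : Sym2 (ZMod n ⊕ ZMod n)) = s(Sum.inl i, Sum.inr i) ∧
        (φ (C i) : Sym2 (ZMod n ⊕ ZMod n)) = s(Sum.inr i, Sum.inr (i + (d : ZMod n))) :=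
  propeller_girth3_iso_lineGraph_genPetersen_general n b c d hd hb hc
end

section
/- No arc-transitive propeller graph has exactly 2 six-cycles through each edge when counted as follows: if every arc of an edge-transitive propeller graph Pr_n(b,c,d) lies only in the two canonical 6-cycles (so N₆ = 2), a contradiction arises. Concretely: if the only 6-cycles through the arc (A_0,A_1) are (A_0,A_1,B_1,A_{1+b},A_b,B_0) and (A_0,A_1,B_{1-b},A_{1-b+b},A_{-b+b},B_{-b})-type canonical cycles, and the only 6-cycles through (A_0,B_0) are the two canonical 6-cycles both containing the 2-arc (A_0,B_0,A_b), then no graph automorphism sends (A_0,A_1) to (A_0,B_0). -/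
open PVert

/-! An automorphism `φ` fixing `A 0` and sending `A 1` to `B 0` maps each of the two
`A`-canonical hexagons through the arc `(A 0, A 1)` to a 6-cycle through `A 0`; by hypothesis
that image is canonical, hence `A`-canonical, since `C`-canonical cycles contain no `A`-vertex.
On an `A`-canonical cycle the only neighbours of `B 0` are `A 0` and `A b`, so the neighbours
`B 1` and `B (1 - b)` of `A 1` on the two hexagons are both sent to `A b`, forcing `b = 0`. -/

namespace propeller

variable {n : ℕ} {b c d : ZMod n}

lemma adj_A_succ (h1 : (1 : ZMod n) ≠ 0) (i : ZMod n) :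
    (propeller n b c d).Adj (A i) (A (i + 1)) :=
  ⟨by simpa using h1, Or.inl ⟨i, Or.inl ⟨rfl, rfl⟩⟩⟩

lemma adj_A_B (i : ZMod n) : (propeller n b c d).Adj (A i) (B i) :=
  ⟨by simp, Or.inl ⟨i, Or.inr (Or.inl ⟨rfl, rfl⟩)⟩⟩

lemma adj_B_A (i : ZMod n) : (propeller n b c d).Adj (B i) (A (i + b)) :=
  ⟨by simp, Or.inl ⟨i, Or.inr (Or.inr (Or.inl ⟨rfl, rfl⟩))⟩⟩

lemma adj_B_sub_A (i : ZMod n) : (propeller n b c d).Adj (B (i - b)) (A i) := by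
  simpa using adj_B_A (b := b) (c := c) (d := d) (i - b)

lemma eq_of_adj_B {v : PVert n} {k : ZMod n} (h : (propeller n b c d).Adj v (B k)) :
    v = A k ∨ v = A (k + b) ∨ v = C k ∨ v = C (k + c) := by
  obtain ⟨-, ⟨i, h⟩ | ⟨i, h⟩⟩ := h <;>
    rcases h with ⟨h, h'⟩ | ⟨h, h'⟩ | ⟨h, h'⟩ | ⟨h, h'⟩ | ⟨h, h'⟩ | ⟨h, h'⟩ <;>
    grind

variable (b c d) in
def aHexagon (h1 : (1 : ZMod n) ≠ 0) (i : ZMod n) : (propeller n b c d).Walk (A i) (A i) :=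
  .cons (adj_A_succ h1 i) <| .cons (adj_A_B _) <| .cons (adj_B_A _) <|
    .cons (by simpa only [add_right_comm] using (adj_A_succ h1 (i + b)).symm) <|
    .cons (adj_B_A i).symm <| .cons (adj_A_B i).symm .nil

lemma support_aHexagon (h1 : (1 : ZMod n) ≠ 0) (i : ZMod n) :
    (aHexagon b c d h1 i).support =
      [A i, A (i + 1), B (i + 1), A (i + 1 + b), A (i + b), B i, A i] := rfl

lemma aHexagon_isCycle (h1 : (1 : ZMod n) ≠ 0) (hb0 : b ≠ 0) (hb1 : b ≠ 1) (hbm1 : b ≠ -1)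
    (i : ZMod n) : (aHexagon b c d h1 i).IsCycle := by
  have : 1 + b ≠ 0 := fun h => hbm1 (eq_neg_of_add_eq_zero_right h)
  rw [aHexagon, SimpleGraph.Walk.cons_isCycle_iff, SimpleGraph.Walk.isPath_def]
  simp [add_assoc, h1, hb0, hb1.symm, this]

variable (b c d) in
def OnlyCanonicalSixCycles : Prop :=
  ∀ (u : PVert n) (p : (propeller n b c d).Walk u u), p.IsCycle → p.length = 6 →
    ∃ i : ZMod n,
      p.support.toFinset = {A i, A (i + 1), B (i + 1), A (i + 1 + b), A (i + b), B i} ∨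
      p.support.toFinset = {C i, C (i + d), B (i + d), C (i + c + d), C (i + c), B i}

lemma OnlyCanonicalSixCycles.eq_A_of_adj_B (h : OnlyCanonicalSixCycles b c d) {u : PVert n}
    {p : (propeller n b c d).Walk u u} (hp : p.IsCycle) (h6 : p.length = 6) {j : ZMod n}
    (hj : A j ∈ p.support) {v : PVert n} (hv : v ∈ p.support) {k : ZMod n}
    (hadj : (propeller n b c d).Adj v (B k)) : v = A k ∨ v = A (k + b) := by
  rw [← List.mem_toFinset] at hj hv
  obtain ⟨i, hS | hS⟩ := h u p hp h6
  · rw [hS] at hv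
    rcases eq_of_adj_B hadj with rfl | rfl | rfl | rfl
    · exact .inl rfl
    · exact .inr rfl
    all_goals simp at hv
  · rw [hS] at hj
    simp at hj

lemma OnlyCanonicalSixCycles.apply_eq_A (h : OnlyCanonicalSixCycles b c d)
    (φ : propeller n b c d ≃g propeller n b c d) (hφ0 : φ (A 0) = A 0) (hφ1 : φ (A 1) = B 0)
    {u : PVert n} {p : (propeller n b c d).Walk u u} (hp : p.IsCycle) (h6 : p.length = 6)
    (hA0 : A 0 ∈ p.support) {x : PVert n} (hx : x ∈ p.support)
    (hadj : (propeller n b c d).Adj x (A 1)) (hx0 : x ≠ A 0) : φ x = A b := by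
  have hmem {y : PVert n} (hy : y ∈ p.support) : φ y ∈ (p.map φ.toHom).support := by
    rw [SimpleGraph.Walk.support_map]
    exact List.mem_map_of_mem hy
  have hφadj : (propeller n b c d).Adj (φ x) (B 0) := hφ1 ▸ φ.map_adj_iff.mpr hadj
  rcases h.eq_A_of_adj_B (hp.map φ.injective) (by simpa using h6) (hφ0 ▸ hmem hA0) (hmem hx)
    hφadj with h0 | hb
  · exact absurd (φ.injective (h0.trans hφ0.symm)) hx0
  · rwa [zero_add] at hb

end propeller

theorem propeller_no_aut_if_only_canonical_six_cycles_general
    (n b c d : ℕ) (hb : 0 < b ∧ b < n)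
    (hb1 : (b : ZMod n) ≠ 1 ∧ (b : ZMod n) ≠ -1)
    (hcanon : ∀ (u : PVert n) (p : (propeller n b c d).Walk u u),
      p.IsCycle → p.length = 6 →
      ∃ i : ZMod n,
        p.support.toFinset =
          {A i, A (i + 1), B (i + 1), A (i + 1 + (b : ZMod n)), A (i + (b : ZMod n)), B i} ∨
        p.support.toFinset =
          {C i, C (i + (d : ZMod n)), B (i + (d : ZMod n)),
           C (i + (c : ZMod n) + (d : ZMod n)), C (i + (c : ZMod n)), B i}) :
    ¬ ∃ φ : propeller n b c d ≃g propeller n b c d, φ (A 0) = A 0 ∧ φ (A 1) = B 0 := by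
  rintro ⟨φ, hφ0, hφ1⟩
  have : Fact (1 < n) := ⟨by omega⟩
  have h1 : (1 : ZMod n) ≠ 0 := one_ne_zero
  have hb0 : (b : ZMod n) ≠ 0 := by
    rw [Ne, ZMod.natCast_eq_zero_iff]
    exact Nat.not_dvd_of_pos_of_lt hb.1 hb.2
  have hcanon' : propeller.OnlyCanonicalSixCycles (b : ZMod n) c d := hcanon
  have hex (i : ZMod n) := propeller.aHexagon_isCycle (c := c) (d := d) h1 hb0 hb1.1 hb1.2 i
  have hB1 : φ (B 1) = A b :=
    hcanon'.apply_eq_A φ hφ0 hφ1 (hex 0) rfl (by simp [propeller.support_aHexagon])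
      (by simp [propeller.support_aHexagon]) (propeller.adj_A_B 1).symm (by simp)
  have hB2 : φ (B (1 - b)) = A b :=
    hcanon'.apply_eq_A φ hφ0 hφ1 (hex (-b)) rfl (by simp [propeller.support_aHexagon])
      (by simp [propeller.support_aHexagon, neg_add_eq_sub])
      (propeller.adj_B_sub_A 1) (by simp)
  have : (1 : ZMod n) = 1 - b := B.inj (φ.injective (hB1.trans hB2.symm))
  exact hb0 (by linear_combination this)

/-- if every `6`-cycle of the propeller graph is canonical (an `A`-canonical
cycle `(A_i, A_{i+1}, B_{i+1}, A_{i+1+b}, A_{i+b}, B_i)` or a `C`-canonical cycle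
`(C_i, C_{i+d}, B_{i+d}, C_{i+c+d}, C_{i+c}, B_i)`), then no automorphism sends the arc
`(A_0, A_1)` to the arc `(A_0, B_0)`; in particular `Γ` is not arc-transitive. -/
theorem propeller_no_aut_if_only_canonical_six_cycles
    (n b c d : ℕ) (hn : 3 ≤ n) (hb : 0 < b ∧ b < n) (hc : 0 < c ∧ c < n)
    (hd : 0 < d ∧ d < n) (hd2 : 2 * d ≠ n)
    (hb1 : (b : ZMod n) ≠ 1 ∧ (b : ZMod n) ≠ -1)
    (hcanon : ∀ (u : PVert n) (p : (propeller n b c d).Walk u u),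
      p.IsCycle → p.length = 6 →
      ∃ i : ZMod n,
        p.support.toFinset =
          {A i, A (i + 1), B (i + 1), A (i + 1 + (b : ZMod n)), A (i + (b : ZMod n)), B i} ∨
        p.support.toFinset =
          {C i, C (i + (d : ZMod n)), B (i + (d : ZMod n)),
           C (i + (c : ZMod n) + (d : ZMod n)), C (i + (c : ZMod n)), B i}) :
    ¬ ∃ φ : propeller n b c d ≃g propeller n b c d, φ (A 0) = A 0 ∧ φ (A 1) = B 0 :=
  propeller_no_aut_if_only_canonical_six_cycles_general n b c d hb hb1 hcanon
end

section
/- Let Γ = Pr_{2m}(m+1, m+d, d) with gcd-appropriate parameters (case 24: b = m+1, c = m+d). Then for every i, the map sending A_i ↦ A_{i+m}, B_i ↦ B_{i+m}, C_i ↦ C_{i+m} (i.e., ρ^m) is an automorphism of order 2, and the quotient graph of Γ by the group ⟨ρ^m⟩ is isomorphic to the propeller graph Pr_m(1,d,d). -/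
open PVert

/-- The map `ρ^m : A_i ↦ A_{i+m}, B_i ↦ B_{i+m}, C_i ↦ C_{i+m}` on `Pr_{2m}(·,·,·)`. -/
def pHalfTurn (m : ℕ) : PVert (2 * m) → PVert (2 * m) :=
  fun v => match v with
  | A i => A (i + (m : ZMod (2 * m)))
  | B i => B (i + (m : ZMod (2 * m)))
  | C i => C (i + (m : ZMod (2 * m)))

/-- Projection of vertices onto the orbits of `⟨ρ^m⟩`: indices are reduced mod `m`. -/
def pProj (m : ℕ) : PVert (2 * m) → PVert m :=
  fun v => match v with
  | A i => A (i.val : ZMod m)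
  | B i => B (i.val : ZMod m)
  | C i => C (i.val : ZMod m)

/-- The quotient graph of `G` by `⟨ρ^m⟩`: vertices are the orbits
`{A_i, A_{i+m}}, {B_i, B_{i+m}}, {C_i, C_{i+m}}` (`i ∈ ℤ_m`), two distinct orbits being
adjacent iff some representative of one is adjacent in `G` to some representative of the
other. -/
def pQuot (m : ℕ) (G : SimpleGraph (PVert (2 * m))) : SimpleGraph (PVert m) where
  Adj x y := x ≠ y ∧ ∃ u v : PVert (2 * m), G.Adj u v ∧ pProj m u = x ∧ pProj m v = y
  symm := by
    constructor
    rintro x y ⟨hne, u, v, ha, hu, hv⟩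
    exact ⟨hne.symm, v, u, ha.symm, hv, hu⟩
  loopless := ⟨fun _ h => h.1 rfl⟩

/-!
Every map of indices `f : ZMod n → ZMod m` that is affine, `f (i + x) = f i + g x` with
`g 1 = 1`, carries edges of `Pr_n(b,c,d)` to edges of `Pr_m(g b, g c, g d)`, and when `f` is
surjective every edge downstairs lifts. The rotation `i ↦ i + m` is such a map with `g = id`,
so it is an automorphism, of order two because `2m = 0` in `ZMod (2m)`. Reduction mod `m` is
such a map with `g = f`; it sends `m + 1, m + d, d` to `1, d, d`, so the quotient by `⟨ρ^m⟩`
is `Pr_m(1,d,d)` on the nose.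
-/

namespace PVert

variable {n m : ℕ}

def map (f : ZMod n → ZMod m) : PVert n → PVert m
  | A i => A (f i)
  | B i => B (f i)
  | C i => C (f i)

@[simp] lemma map_A (f : ZMod n → ZMod m) (i : ZMod n) : (A i).map f = A (f i) := rfl
@[simp] lemma map_B (f : ZMod n → ZMod m) (i : ZMod n) : (B i).map f = B (f i) := rfl
@[simp] lemma map_C (f : ZMod n → ZMod m) (i : ZMod n) : (C i).map f = C (f i) := rfl

lemma map_injective {f : ZMod n → ZMod m} (hf : f.Injective) : (map f).Injective := by
  rintro (i | i | i) (j | j | j) h <;> simp_all [hf.eq_iff]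

/-- The rotation `ρ^k`. -/
def rotate (k : ZMod n) : PVert n ≃ PVert n where
  toFun := map (· + k)
  invFun := map (· - k)
  left_inv v := by cases v <;> simp
  right_inv v := by cases v <;> simp

end PVert

section Map

variable {n m : ℕ} {f g : ZMod n → ZMod m} {b c d : ZMod n}

lemma propellerRel_map (hf : ∀ i x, f (i + x) = f i + g x) (hg : g 1 = 1) {u v : PVert n}
    (h : propellerRel n b c d u v) : propellerRel m (g b) (g c) (g d) (u.map f) (v.map f) := by
  obtain ⟨i, h⟩ := h
  refine ⟨f i, ?_⟩
  rcases h with ⟨rfl, rfl⟩ | ⟨rfl, rfl⟩ | ⟨rfl, rfl⟩ | ⟨rfl, rfl⟩ | ⟨rfl, rfl⟩ | ⟨rfl, rfl⟩ <;>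
    simp [hf, hg]

lemma exists_propellerRel_map_eq (hf : ∀ i x, f (i + x) = f i + g x) (hg : g 1 = 1)
    (hsurj : f.Surjective) {x y : PVert m} (h : propellerRel m (g b) (g c) (g d) x y) :
    ∃ u v, propellerRel n b c d u v ∧ u.map f = x ∧ v.map f = y := by
  obtain ⟨j, h⟩ := h
  obtain ⟨i, rfl⟩ := hsurj j
  rcases h with ⟨rfl, rfl⟩ | ⟨rfl, rfl⟩ | ⟨rfl, rfl⟩ | ⟨rfl, rfl⟩ | ⟨rfl, rfl⟩ | ⟨rfl, rfl⟩
  · exact ⟨A i, A (i + 1), ⟨i, by simp⟩, rfl, by simp [hf, hg]⟩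
  · exact ⟨A i, B i, ⟨i, by simp⟩, rfl, rfl⟩
  · exact ⟨B i, A (i + b), ⟨i, by simp⟩, rfl, by simp [hf]⟩
  · exact ⟨B i, C (i + c), ⟨i, by simp⟩, rfl, by simp [hf]⟩
  · exact ⟨C i, B i, ⟨i, by simp⟩, rfl, rfl⟩
  · exact ⟨C i, C (i + d), ⟨i, by simp⟩, rfl, by simp [hf]⟩

lemma propeller_adj_map (hf : ∀ i x, f (i + x) = f i + g x) (hg : g 1 = 1) (hinj : f.Injective)
    {u v : PVert n} (h : (propeller n b c d).Adj u v) :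
    (propeller m (g b) (g c) (g d)).Adj (u.map f) (v.map f) :=
  ⟨(PVert.map_injective hinj).ne h.1, h.2.imp (propellerRel_map hf hg) (propellerRel_map hf hg)⟩

end Map

def propellerRotate (n : ℕ) (b c d k : ZMod n) : propeller n b c d ≃g propeller n b c d where
  toEquiv := PVert.rotate k
  map_rel_iff' {u v} := by
    refine ⟨fun h => ?_, propeller_adj_map (g := id) (fun _ _ => add_right_comm ..) rfl
      (add_left_injective k)⟩
    have h' : (propeller n b c d).Adj ((PVert.rotate k).symm (PVert.rotate k u))
        ((PVert.rotate k).symm (PVert.rotate k v)) :=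
      propeller_adj_map (g := id) (fun _ _ => (sub_add_eq_add_sub ..).symm) rfl
        sub_left_injective h
    simpa only [Equiv.symm_apply_apply] using h'

lemma pHalfTurn_eq_rotate (m : ℕ) : pHalfTurn m = PVert.rotate (m : ZMod (2 * m)) := by
  funext v; cases v <;> rfl

lemma natCast_add_self_eq_zero (m : ℕ) : (m : ZMod (2 * m)) + m = 0 := by
  simpa [two_mul] using ZMod.natCast_self (2 * m)

lemma pHalfTurn_pHalfTurn (m : ℕ) (v : PVert (2 * m)) : pHalfTurn m (pHalfTurn m v) = v := by
  cases v <;> simp [pHalfTurn, add_assoc, natCast_add_self_eq_zero]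

lemma pHalfTurn_ne_id {m : ℕ} (hm : 0 < m) : pHalfTurn m ≠ id := by
  intro h
  have h0 : (m : ZMod (2 * m)) = 0 := by simpa [pHalfTurn] using congrFun h (A 0)
  have := Nat.le_of_dvd hm ((ZMod.natCast_eq_zero_iff m (2 * m)).mp h0)
  omega

lemma pProj_eq_map (m : ℕ) [NeZero m] :
    pProj m = PVert.map (ZMod.castHom (dvd_mul_left m 2) (ZMod m)) := by
  funext v; cases v <;> simp [pProj, ZMod.natCast_val]

lemma pQuot_propeller (m : ℕ) [NeZero m] (b c d : ZMod (2 * m)) :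
    pQuot m (propeller (2 * m) b c d) =
      propeller m (ZMod.cast b) (ZMod.cast c) (ZMod.cast d) := by
  set π := ZMod.castHom (dvd_mul_left m 2) (ZMod m)
  have hπ : ∀ i x, π (i + x) = π i + π x := map_add π
  ext x y
  simp only [pQuot, propeller, pProj_eq_map]
  refine and_congr_right fun hne => ⟨?_, ?_⟩
  · rintro ⟨u, v, ⟨-, huv | hvu⟩, rfl, rfl⟩
    exacts [Or.inl (propellerRel_map hπ (map_one π) huv),
      Or.inr (propellerRel_map hπ (map_one π) hvu)]
  · rintro (hxy | hyx)
    · obtain ⟨u, v, huv, rfl, rfl⟩ :=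
        exists_propellerRel_map_eq hπ (map_one π) (ZMod.castHom_surjective _) hxy
      exact ⟨u, v, ⟨fun e => hne (by rw [e]), Or.inl huv⟩, rfl, rfl⟩
    · obtain ⟨v, u, hvu, rfl, rfl⟩ :=
        exists_propellerRel_map_eq hπ (map_one π) (ZMod.castHom_surjective _) hyx
      exact ⟨u, v, ⟨fun e => hne (by rw [e]), Or.inr hvu⟩, rfl, rfl⟩

theorem propeller_case24_quotient_general
    (m d : ℕ) (hm : 3 ≤ m) :
    (∀ u v : PVert (2 * m),
      (propeller (2 * m) (m + 1) (m + d) d).Adj u v ↔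
      (propeller (2 * m) (m + 1) (m + d) d).Adj (pHalfTurn m u) (pHalfTurn m v)) ∧
    (∀ v : PVert (2 * m), pHalfTurn m (pHalfTurn m v) = v) ∧
    pHalfTurn m ≠ id ∧
    Nonempty (pQuot m (propeller (2 * m) (m + 1) (m + d) d) ≃g propeller m 1 d d) := by
  have : NeZero m := ⟨by omega⟩
  refine ⟨fun u v => ?_, pHalfTurn_pHalfTurn m, pHalfTurn_ne_id (by omega), ?_⟩
  · rw [pHalfTurn_eq_rotate]
    exact (propellerRotate _ _ _ _ _).map_adj_iff.symm
  · rw [pQuot_propeller]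
    simp only [dvd_mul_left, ZMod.cast_add, ZMod.cast_natCast, CharP.cast_eq_zero, ZMod.cast_one,
      zero_add]
    exact ⟨SimpleGraph.Iso.refl⟩

/-- in `Γ = Pr_{2m}(m+1, m+d, d)`, the map `ρ^m` is an automorphism of order
two, and the quotient graph of `Γ` by `⟨ρ^m⟩` is isomorphic to the propeller graph
`Pr_m(1, d, d)`. -/
theorem propeller_case24_quotient
    (m d : ℕ) (hm : 3 ≤ m) (hd : 0 < d ∧ d < m) (hd2 : 2 * d ≠ m) :
    (∀ u v : PVert (2 * m),
      (propeller (2 * m) (m + 1) (m + d) d).Adj u v ↔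
      (propeller (2 * m) (m + 1) (m + d) d).Adj (pHalfTurn m u) (pHalfTurn m v)) ∧
    (∀ v : PVert (2 * m), pHalfTurn m (pHalfTurn m v) = v) ∧
    pHalfTurn m ≠ id ∧
    Nonempty (pQuot m (propeller (2 * m) (m + 1) (m + d) d) ≃g propeller m 1 d d) :=
  propeller_case24_quotient_general m d hm
end
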